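/- Let 2 ≤ p < ∞ and 2 ≤ q < ∞, and define h(t) := (1 − q/p) t² + (q/p) t^{2−p} − 1 for t ∈ (0,1]. Then h is nonincreasing on (0,1]; in particular h(t) ≥ h(1) = 0 for all t ∈ (0,1]. -/

import Mathlib

open Real Set

/-! On `(0, 1]` we have `t ^ (1 - p) ≥ t`, so with `c = q / p` the derivative
`2 (1 - c) t + c (2 - p) t ^ (1 - p)` of `h` is at most `(2 - cp) t = (2 - q) t ≤ 0`. -/

lemma hasDerivAt_mul_sq_add_mul_rpow (a c r : ℝ) {t : ℝ} (ht : 0 < t) :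
    HasDerivAt (fun t : ℝ => a * t ^ 2 + c * t ^ r) (2 * a * t + c * r * t ^ (r - 1)) t := by
  have hsq : HasDerivAt (fun x : ℝ => x ^ 2) (2 * t) t := by
    simpa using hasDerivAt_pow 2 t
  have hrpow := Real.hasDerivAt_rpow_const (p := r) (Or.inl ht.ne')
  exact ((hsq.const_mul a).add (hrpow.const_mul c)).congr_deriv (by ring)

lemma antitoneOn_mul_sq_add_mul_rpow {a c r : ℝ} (hc : 0 ≤ c) (hr : r ≤ 0)
    (hslope : 2 * a + c * r ≤ 0) :
    AntitoneOn (fun t : ℝ => a * t ^ 2 + c * t ^ r) (Ioc 0 1) := by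
  refine antitoneOn_of_hasDerivWithinAt_nonpos (f' := fun t => 2 * a * t + c * r * t ^ (r - 1))
    (convex_Ioc 0 1)
    (fun t ht => (hasDerivAt_mul_sq_add_mul_rpow a c r ht.1).continuousAt.continuousWithinAt)
    ?_ ?_ <;> rw [interior_Ioc]
  · exact fun t ht => (hasDerivAt_mul_sq_add_mul_rpow a c r ht.1).hasDerivWithinAt
  rintro t ⟨ht0, ht1⟩
  have hpow : t ≤ t ^ (r - 1) := by
    simpa using Real.rpow_le_rpow_of_exponent_ge ht0 ht1.le (by linarith : r - 1 ≤ 1)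
  calc 2 * a * t + c * r * t ^ (r - 1)
      ≤ 2 * a * t + c * r * t :=
        add_le_add_right (mul_le_mul_of_nonpos_left hpow (mul_nonpos_of_nonneg_of_nonpos hc hr)) _
    _ = (2 * a + c * r) * t := by ring
    _ ≤ 0 := mul_nonpos_of_nonpos_of_nonneg hslope ht0.le

theorem h_antitone (p q : ℝ) (hp : 2 ≤ p) (hq : 2 ≤ q) :
    AntitoneOn (fun t : ℝ => (1 - q / p) * t ^ 2 + (q / p) * t ^ (2 - p) - 1)
        (Ioc 0 1) ∧
      (1 - q / p) * (1:ℝ) ^ 2 + (q / p) * (1:ℝ) ^ (2 - p) - 1 = 0 ∧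
      ∀ t ∈ Ioc (0:ℝ) 1,
        0 ≤ (1 - q / p) * t ^ 2 + (q / p) * t ^ (2 - p) - 1 := by
  have hp0 : 0 < p := by linarith
  have hslope : 2 * (1 - q / p) + q / p * (2 - p) ≤ 0 := by
    have : 2 * (1 - q / p) + q / p * (2 - p) = 2 - q := by field_simp; ring
    linarith
  have hanti := antitoneOn_mul_sq_add_mul_rpow (div_nonneg (by linarith) hp0.le)
    (by linarith) hslope
  have hmono : AntitoneOn (fun t : ℝ => (1 - q / p) * t ^ 2 + (q / p) * t ^ (2 - p) - 1)
      (Ioc 0 1) := fun x hx y hy hxy => sub_le_sub_right (hanti hx hy hxy) 1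
  have hone : (1 - q / p) * (1:ℝ) ^ 2 + (q / p) * (1:ℝ) ^ (2 - p) - 1 = 0 := by simp
  refine ⟨hmono, hone, fun t ht => ?_⟩
  exact hone ▸ hmono ht (right_mem_Ioc.2 one_pos) ht.2
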